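/- arXiv:1907.11445 — 2 statements merged into one kernel-verified Lean document; each statement's English description precedes it below -/
import Mathlib

section
/- In a gossip graph over N nodes, suppose that the set of nodes that create at least one fork has at most f elements, where 3f < N. If the pair of events (x, y) is a fork and some event z strongly sees x, then no event in the graph strongly sees y. -/
/-- A gossip graph over a set of nodes `I` with events `E`: each event has an optional
self-parent and optional other-parent, and a creator; the self-parent (when present) has
the same creator, and the parent relation is well-founded (the graph is acyclic). -/
structure GossipGraph (I : Type*) (E : Type*) where
  creator : E → I
  selfParent : E → Option E
  otherParent : E → Option E
  selfParent_creator : ∀ e p, selfParent e = some p → creator p = creator e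
  parent_wf : WellFounded fun a b : E => selfParent b = some a ∨ otherParent b = some a

namespace GossipGraph

variable {I E : Type*} (G : GossipGraph I E)

/-- `a` is a parent (self- or other-) of `b`. -/
def parentOf (a b : E) : Prop :=
  G.selfParent b = some a ∨ G.otherParent b = some a

/-- `a` is an ancestor of `b` iff `a = b`, or `a` is an ancestor of `b`'s self-parent, or
`a` is an ancestor of `b`'s other-parent. -/
def ancestor (a b : E) : Prop :=
  Relation.ReflTransGen G.parentOf a b

/-- `a` is a self-ancestor of `b` iff `a = b` or `a` is a self-ancestor of `b`'s
self-parent. -/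
def selfAncestor (a b : E) : Prop :=
  Relation.ReflTransGen (fun x y : E => G.selfParent y = some x) a b

/-- A fork by node `c`: a pair of distinct events created by `c`, neither of which is an
ancestor of the other. -/
def fork (c : I) (x y : E) : Prop :=
  G.creator x = c ∧ G.creator y = c ∧ x ≠ y ∧ ¬ G.ancestor x y ∧ ¬ G.ancestor y x

/-- `a` sees `b` iff `b` is an ancestor of `a` and there is no fork by `b`'s creator both
of whose events are ancestors of `a`. -/
def sees (a b : E) : Prop :=
  G.ancestor b a ∧
    ¬ ∃ b₁ b₂ : E, G.fork (G.creator b) b₁ b₂ ∧ G.ancestor b₁ a ∧ G.ancestor b₂ a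

/-- `a` strongly sees `b` iff `a` sees events created by more than `2N/3` distinct nodes,
all of which see `b`. -/
def stronglySees [Fintype I] (a b : E) : Prop :=
  ∃ s : Finset I, 3 * s.card > 2 * Fintype.card I ∧
    ∀ i ∈ s, ∃ x : E, G.creator x = i ∧ G.sees a x ∧ G.sees x b

end GossipGraph

/-- In a gossip graph over `N` nodes where the set of forking nodes has
at most `f` elements with `3f < N`, if `(x, y)` is a fork and some event `z` strongly
sees `x`, then no event strongly sees `y`. -/
theorem no_strongly_seen_fork {I E : Type*} [Fintype I]
    (G : GossipGraph I E) (f : ℕ)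
    (F : Finset I) (hF : ∀ c : I, (∃ a b : E, G.fork c a b) → c ∈ F)
    (hFcard : F.card ≤ f) (h3f : 3 * f < Fintype.card I)
    (x y z : E) (hfork : G.fork (G.creator x) x y)
    (hz : G.stronglySees z x) :
    ∀ w : E, ¬ G.stronglySees w y := by
  
  intro w hw
  classical
  obtain ⟨s₁, hs₁card, hs₁⟩ := hz
  obtain ⟨s₂, hs₂card, hs₂⟩ := hw
  -- the intersection is bigger than F
  have hunion : (s₁ ∪ s₂).card ≤ Fintype.card I := Finset.card_le_univ _
  have hcards : (s₁ ∪ s₂).card + (s₁ ∩ s₂).card = s₁.card + s₂.card :=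
    Finset.card_union_add_card_inter s₁ s₂
  have hbig : F.card < (s₁ ∩ s₂).card := by omega
  have hexists : ∃ i ∈ s₁ ∩ s₂, i ∉ F := by
    by_contra h
    push_neg at h
    have : (s₁ ∩ s₂) ⊆ F := fun i hi => h i hi
    have := Finset.card_le_card this
    omega
  obtain ⟨i, hi, hiF⟩ := hexists
  obtain ⟨e₁, he₁c, hze₁, he₁x⟩ := hs₁ i (Finset.mem_of_mem_inter_left hi)
  obtain ⟨e₂, he₂c, hwe₂, he₂y⟩ := hs₂ i (Finset.mem_of_mem_inter_right hi)
  have hnofork : ¬ ∃ a b : E, G.fork i a b := fun h => hiF (hF i h)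
  have hcy : G.creator y = G.creator x := hfork.2.1
  have hcomp : G.ancestor e₁ e₂ ∨ G.ancestor e₂ e₁ := by
    by_contra h
    push_neg at h
    have hne : e₁ ≠ e₂ := by
      rintro rfl
      exact h.1 (Relation.ReflTransGen.refl)
    exact hnofork ⟨e₁, e₂, he₁c, he₂c, hne, h.1, h.2⟩
  cases hcomp with
  | inl h12 =>
    -- x and y are both ancestors of e₂, contradicting e₂ sees y
    have hx : G.ancestor x e₂ := Relation.ReflTransGen.trans he₁x.1 h12
    have hy : G.ancestor y e₂ := he₂y.1
    exact he₂y.2 ⟨x, y, by rw [hcy]; exact hfork, hx, hy⟩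
  | inr h21 =>
    -- x and y are both ancestors of e₁, contradicting e₁ sees x
    have hx : G.ancestor x e₁ := he₁x.1
    have hy : G.ancestor y e₁ := Relation.ReflTransGen.trans he₂y.1 h21
    exact he₁x.2 ⟨x, y, hfork, hx, hy⟩
end

section
/- Let I be a finite set of N nodes with N ≥ 1, let v : I × I → Bool be a matrix of meta-votes such that for every node i the set {j : v(i,j) = true} has more than 2N/3 elements, and let r : I → Bool be meta-election results such that for every node j and every boolean b, if r(j) = b then at least N/3 nodes i satisfy v(i,j) = b. Then the set of nodes j with r(j) = true is nonempty. -/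
/-- Let `I` be a finite set of `N ≥ 1` nodes, `v i j` the meta-vote of
node `i` on node `j`, where every node meta-votes `true` on more than `2N/3` of the
nodes, and let `r j` be the meta-election result for node `j`, where any decided
result `b` for `j` is backed by at least `N/3` meta-votes equal to `b` in column `j`.
Then some node `j` has meta-election result `true`. -/
theorem meta_election_true_nonempty {I : Type*} [Fintype I]
    (hN : 1 ≤ Fintype.card I)
    (v : I → I → Bool) (r : I → Bool)
    (hv : ∀ i : I, 3 * (Finset.univ.filter fun j => v i j = true).card
      > 2 * Fintype.card I)
    (hr : ∀ (j : I) (b : Bool), r j = b →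
      3 * (Finset.univ.filter fun i => v i j = b).card ≥ Fintype.card I) :
    ∃ j : I, r j = true := by
  by_contra h
  push_neg at h
  have hall : ∀ j : I, r j = false := by
    intro j
    cases hrj : r j with
    | false => rfl
    | true => exact absurd hrj (h j)
  set N := Fintype.card I with hNdef
  -- column bound: each column has ≥ N/3 false votes
  have hcol : ∀ j : I, 3 * (Finset.univ.filter fun i => v i j = false).card ≥ N :=
    fun j => hr j false (hall j)
  -- row bound: each row has < N/3 false votes (strictly, 3*fr ≤ N-1)
  have hrow : ∀ i : I, 3 * (Finset.univ.filter fun j => v i j = false).card + 1 ≤ N := by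
    intro i
    have hsplit : (Finset.univ.filter fun j => v i j = true).card
        + (Finset.univ.filter fun j => v i j = false).card = N := by
      have heq : (Finset.univ.filter fun j => v i j = false)
          = (Finset.univ.filter fun j => ¬ v i j = true) := by
        apply Finset.filter_congr; intro j _; simp
      rw [heq, Finset.card_filter_add_card_filter_not, Finset.card_univ]
    have := hv i
    omega
  -- double counting
  have hswap : ∑ j : I, (Finset.univ.filter fun i => v i j = false).card
      = ∑ i : I, (Finset.univ.filter fun j => v i j = false).card := by
    simp only [Finset.card_filter]
    exact Finset.sum_comm
  have h1 : N * N ≤ 3 * ∑ j : I, (Finset.univ.filter fun i => v i j = false).card := by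
    rw [Finset.mul_sum]
    calc N * N = ∑ _j : I, N := by rw [Finset.sum_const, Finset.card_univ, smul_eq_mul, mul_comm]
    _ ≤ _ := Finset.sum_le_sum fun j _ => hcol j
  have h2 : 3 * (∑ i : I, (Finset.univ.filter fun j => v i j = false).card) + N ≤ N * N := by
    have hsum := Finset.sum_le_sum (s := Finset.univ) fun i (_ : i ∈ Finset.univ) => hrow i
    simp only [Finset.sum_add_distrib, Finset.sum_const, Finset.card_univ, smul_eq_mul,
      mul_one, ← hNdef] at hsum
    rw [Finset.mul_sum]
    exact hsum
  rw [hswap] at h1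
  omega
end
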